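/- Let R be a commutative ring containing ℚ and consider the ring of pseudo-differential operators: formal Laurent series A = Σ_{n ≤ m} aₙ ∂ₓⁿ with aₙ ∈ R, with multiplication determined by ∂ₓᵏ ∘ f = Σ_{l≥0} [k(k-1)⋯(k-l+1)/l!] (∂ₓˡ f) ∂ₓ^{k-l} for f ∈ R (where R is a ring of functions with derivation ∂ₓ). Then for any r ≥ 2 and any pseudo-differential operator A of the form A = ∂ₓʳ + Σ_{n≥1} aₙ ∂ₓ^{r-n}, there exists a unique pseudo-differential operator B of the form B = ∂ₓ + Σ_{n≥0} bₙ ∂ₓ^{-n} such that Bʳ = A. -/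

import Mathlib

open scoped BigOperators

/-- The generalized binomial coefficient `k(k-1)⋯(k-l+1)/l!` for `k : ℤ`. -/
noncomputable def fallCoeff (k : ℤ) (l : ℕ) : ℚ :=
  (∏ i ∈ Finset.range l, ((k : ℚ) - (i : ℚ))) / (Nat.factorial l : ℚ)

/-- Coefficientwise composition of pseudo-differential operators: if
`A = Σ aₖ ∂ₓᵏ` and `B = Σ bₗ ∂ₓˡ` (with coefficient functions `A B : ℤ → R`),
then `A ∘ B = Σ_{k,l,j} aₖ (k(k-1)⋯(k-j+1)/j!) (∂ₓʲ bₗ) ∂ₓ^{k+l-j}`, whose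
coefficient at `∂ₓⁿ` is given by the following (finite) sum over `(l, j)`. -/
noncomputable def pdoMul {R : Type*} [CommRing R] [Algebra ℚ R]
    (d : Derivation ℚ R R) (A B : ℤ → R) : ℤ → R :=
  fun n => ∑ᶠ p : ℤ × ℕ,
    fallCoeff (n + (p.2 : ℤ) - p.1) p.2 •
      (A (n + (p.2 : ℤ) - p.1) * (⇑d)^[p.2] (B p.1))

/-- Powers of a pseudo-differential operator; the zeroth power is the
identity operator `1 = ∂ₓ⁰`. -/
noncomputable def pdoPow {R : Type*} [CommRing R] [Algebra ℚ R]
    (d : Derivation ℚ R R) (B : ℤ → R) : ℕ → (ℤ → R)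
  | 0 => fun n => if n = 0 then 1 else 0
  | (m + 1) => pdoMul d B (pdoPow d B m)

/-!
If `B` and `B'` have the form `∂ₓ + Σ bₙ ∂ₓ^{-n}` and their coefficients agree from `∂ₓᴷ`
on, then `Bʳ` and `B'ʳ` agree from `∂ₓ^{K+r-1}` on, and their coefficients at `∂ₓ^{K+r-2}`
differ by `r (B (K - 1) - B' (K - 1))`. Since `r` is invertible in `R`, the coefficients of an `r`-th root
of `A` are thus determined one at a time from the top by those of `A`: this gives
uniqueness, and existence by choosing each new coefficient so that the next coefficient of
the `r`-th power is the right one.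
-/

section PdoMul

variable {R : Type*} [CommRing R] [Algebra ℚ R] (d : Derivation ℚ R R)

noncomputable def pdoMulTerm (A B : ℤ → R) (n : ℤ) (p : ℤ × ℕ) : R :=
  fallCoeff (n + (p.2 : ℤ) - p.1) p.2 • (A (n + (p.2 : ℤ) - p.1) * (⇑d)^[p.2] (B p.1))

lemma pdoMul_apply (A B : ℤ → R) (n : ℤ) :
    pdoMul d A B n = ∑ᶠ p, pdoMulTerm d A B n p := rfl

variable {d} {A A' B B' : ℤ → R} {a b K L n : ℤ}

lemma pdoMulTerm_mk_zero (l : ℤ) :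
    pdoMulTerm d A B n (l, 0) = A (n - l) * B l := by
  simp [pdoMulTerm, fallCoeff]

lemma le_of_pdoMulTerm_ne_zero (hA : ∀ k, a < k → A k = 0) (hB : ∀ l, b < l → B l = 0)
    {p : ℤ × ℕ} (hp : pdoMulTerm d A B n p ≠ 0) : n + p.2 - p.1 ≤ a ∧ p.1 ≤ b := by
  constructor
  · by_contra h
    exact hp (by simp [pdoMulTerm, hA _ (not_le.mp h)])
  · by_contra h
    exact hp (by simp [pdoMulTerm, hB _ (not_le.mp h), iterate_map_zero])

lemma finite_support_pdoMulTerm (hA : ∀ k, a < k → A k = 0) (hB : ∀ l, b < l → B l = 0) :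
    (Function.support (pdoMulTerm d A B n)).Finite := by
  refine ((Set.finite_Icc (n - a) b).prod (Set.finite_Iic (a + b - n).toNat)).subset ?_
  rintro ⟨l, j⟩ hp
  have := le_of_pdoMulTerm_ne_zero hA hB hp
  simp only [Set.mem_prod, Set.mem_Icc, Set.mem_Iic]
  omega

lemma pdoMul_eq_zero_of_lt (hA : ∀ k, a < k → A k = 0) (hB : ∀ l, b < l → B l = 0)
    (hn : a + b < n) : pdoMul d A B n = 0 := by
  refine finsum_eq_zero_of_forall_eq_zero fun p => ?_
  by_contra hp
  have := le_of_pdoMulTerm_ne_zero hA hB hp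
  omega

lemma pdoMul_add (hA : ∀ k, a < k → A k = 0) (hB : ∀ l, b < l → B l = 0) :
    pdoMul d A B (a + b) = A a * B b := by
  rw [pdoMul_apply, finsum_eq_single _ (b, 0), pdoMulTerm_mk_zero, add_sub_cancel_right]
  rintro ⟨l, j⟩ hne
  by_contra hp
  have := le_of_pdoMulTerm_ne_zero hA hB hp
  exact hne (by ext <;> simp <;> omega)

lemma pdoMulTerm_congr (hA : ∀ k, a < k → A k = 0) (hA' : ∀ k, a < k → A' k = 0)
    (hB : ∀ l, b < l → B l = 0) (hB' : ∀ l, b < l → B' l = 0)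
    (hAA' : ∀ k, K ≤ k → A k = A' k) (hBB' : ∀ l, L ≤ l → B l = B' l) (p : ℤ × ℕ)
    (h : n + p.2 - p.1 ≤ a → p.1 ≤ b → K ≤ n + p.2 - p.1 ∧ L ≤ p.1) :
    pdoMulTerm d A B n p = pdoMulTerm d A' B' n p := by
  by_cases hk : n + p.2 - p.1 ≤ a
  · by_cases hl : p.1 ≤ b
    · simp only [pdoMulTerm, hAA' _ (h hk hl).1, hBB' _ (h hk hl).2]
    · simp [pdoMulTerm, hB _ (not_le.mp hl), hB' _ (not_le.mp hl), iterate_map_zero]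
  · simp [pdoMulTerm, hA _ (not_le.mp hk), hA' _ (not_le.mp hk)]

lemma pdoMul_eq_pdoMul_of_eqOn (hA : ∀ k, a < k → A k = 0) (hA' : ∀ k, a < k → A' k = 0)
    (hB : ∀ l, b < l → B l = 0) (hB' : ∀ l, b < l → B' l = 0)
    (hAA' : ∀ k, K ≤ k → A k = A' k) (hBB' : ∀ l, L ≤ l → B l = B' l)
    (hKn : K + b ≤ n) (hLn : a + L ≤ n) :
    pdoMul d A B n = pdoMul d A' B' n :=
  finsum_congr fun p => pdoMulTerm_congr hA hA' hB hB' hAA' hBB' p (by omega)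

/-- Only the terms `(b, 0)` and `(L - 1, 0)` of the two products differ. -/
lemma pdoMul_sub_pdoMul_of_eqOn (hA : ∀ k, a < k → A k = 0) (hA' : ∀ k, a < k → A' k = 0)
    (hB : ∀ l, b < l → B l = 0) (hB' : ∀ l, b < l → B' l = 0)
    (hAA' : ∀ k, K ≤ k → A k = A' k) (hBB' : ∀ l, L ≤ l → B l = B' l)
    (hKa : K ≤ a) (hKL : K + b = a + L) :
    pdoMul d A B (K + b - 1) - pdoMul d A' B' (K + b - 1) =
      (A (K - 1) - A' (K - 1)) * B b + A a * (B (L - 1) - B' (L - 1)) := by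
  have hne : ((b, 0) : ℤ × ℕ) ≠ (L - 1, 0) := by simp; omega
  rw [pdoMul_apply, pdoMul_apply, ← finsum_sub_distrib (finite_support_pdoMulTerm hA hB)
    (finite_support_pdoMulTerm hA' hB'),
    finsum_eq_sum_of_support_subset (s := {(b, 0), (L - 1, 0)}), Finset.sum_pair hne]
  · simp only [pdoMulTerm_mk_zero, show K + b - 1 - b = K - 1 by ring,
      show K + b - 1 - (L - 1) = a by omega, hAA' a hKa, hBB' b (by omega)]
    ring
  · rintro ⟨l, j⟩ hp
    by_contra hmem
    simp only [Finset.coe_insert, Finset.coe_singleton, Set.mem_insert_iff,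
      Set.mem_singleton_iff, Prod.mk.injEq, not_or] at hmem
    refine hp (sub_eq_zero.mpr (pdoMulTerm_congr hA hA' hB hB' hAA' hBB' _ ?_))
    intro hk hl
    omega

end PdoMul

section PdoPow

variable {R : Type*} [CommRing R] [Algebra ℚ R] {d : Derivation ℚ R R} {B B' : ℤ → R}

lemma pdoPow_succ (B : ℤ → R) (m : ℕ) : pdoPow d B (m + 1) = pdoMul d B (pdoPow d B m) := rfl

lemma pdoPow_eq_zero_of_lt (hB : ∀ k, 1 < k → B k = 0) :
    ∀ (m : ℕ) (n : ℤ), (m : ℤ) < n → pdoPow d B m n = 0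
  | 0, n, hn => if_neg (by omega)
  | m + 1, n, hn => pdoMul_eq_zero_of_lt hB (pdoPow_eq_zero_of_lt hB m) (by omega)

lemma pdoPow_natCast (hB1 : B 1 = 1) (hB : ∀ k, 1 < k → B k = 0) :
    ∀ m : ℕ, pdoPow d B m m = 1
  | 0 => by simp [pdoPow]
  | m + 1 => by
    rw [pdoPow_succ, show ((m + 1 : ℕ) : ℤ) = 1 + m by push_cast; ring,
      pdoMul_add hB (pdoPow_eq_zero_of_lt hB m), hB1, pdoPow_natCast hB1 hB m, one_mul]

lemma pdoPow_eq_pdoPow_of_eqOn (hB : ∀ k, 1 < k → B k = 0) (hB' : ∀ k, 1 < k → B' k = 0)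
    {K : ℤ} (hBB' : ∀ k, K ≤ k → B k = B' k) :
    ∀ (m : ℕ) (n : ℤ), K + m - 1 ≤ n → pdoPow d B m n = pdoPow d B' m n
  | 0, _, _ => rfl
  | m + 1, _, hn =>
    pdoMul_eq_pdoMul_of_eqOn hB hB' (pdoPow_eq_zero_of_lt hB m) (pdoPow_eq_zero_of_lt hB' m)
      hBB' (pdoPow_eq_pdoPow_of_eqOn hB hB' hBB' m) (by omega) (by omega)

lemma pdoPow_sub_pdoPow_of_eqOn (hB1 : B 1 = 1) (hB : ∀ k, 1 < k → B k = 0)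
    (hB' : ∀ k, 1 < k → B' k = 0) {K : ℤ} (hK : K ≤ 1) (hBB' : ∀ k, K ≤ k → B k = B' k) :
    ∀ m : ℕ, pdoPow d B m (K + m - 2) - pdoPow d B' m (K + m - 2) =
      m * (B (K - 1) - B' (K - 1))
  | 0 => by rw [Nat.cast_zero, Nat.cast_zero, zero_mul]; exact sub_eq_zero.mpr rfl
  | m + 1 => by
    rw [pdoPow_succ, pdoPow_succ, show K + ((m + 1 : ℕ) : ℤ) - 2 = K + m - 1 by push_cast; ring,
      pdoMul_sub_pdoMul_of_eqOn hB hB' (pdoPow_eq_zero_of_lt hB m)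
        (pdoPow_eq_zero_of_lt hB' m) hBB' (pdoPow_eq_pdoPow_of_eqOn hB hB' hBB' m) hK
        (by ring),
      pdoPow_natCast hB1 hB, hB1, show K + m - 1 - 1 = K + m - 2 by ring,
      pdoPow_sub_pdoPow_of_eqOn hB1 hB hB' hK hBB' m]
    push_cast
    ring

end PdoPow

section RatAlgebra

variable {R : Type*} [CommRing R] [Algebra ℚ R] {r : ℕ}

lemma natCast_mul_inv_smul (hr : r ≠ 0) (x : R) : (r : R) * ((r : ℚ)⁻¹ • x) = x := by
  rw [← nsmul_eq_mul, ← Nat.cast_smul_eq_nsmul ℚ, smul_smul,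
    mul_inv_cancel₀ (Nat.cast_ne_zero.mpr hr), one_smul]

lemma eq_zero_of_natCast_mul_eq_zero (hr : r ≠ 0) {x : R} (h : (r : R) * x = 0) : x = 0 :=
  calc x = (r : R) * ((r : ℚ)⁻¹ • x) := (natCast_mul_inv_smul hr x).symm
    _ = (r : ℚ)⁻¹ • ((r : R) * x) := mul_smul_comm _ _ _
    _ = 0 := by rw [h, smul_zero]

end RatAlgebra

section Root

variable {R : Type*} [CommRing R] [Algebra ℚ R] {d : Derivation ℚ R R}

lemma eq_of_pdoPow_eq {r : ℕ} (hr : r ≠ 0) {B B' : ℤ → R} (hB1 : B 1 = 1) (hB'1 : B' 1 = 1)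
    (hB : ∀ k, 1 < k → B k = 0) (hB' : ∀ k, 1 < k → B' k = 0)
    (h : pdoPow d B r = pdoPow d B' r) : B = B' := by
  suffices key : ∀ t : ℕ, ∀ k : ℤ, 1 - t ≤ k → B k = B' k by
    funext k
    exact key (1 - k).toNat k (by omega)
  intro t
  induction t with
  | zero =>
    intro k hk
    rcases (show k = 1 ∨ 1 < k by omega) with rfl | hk
    · rw [hB1, hB'1]
    · rw [hB k hk, hB' k hk]
  | succ t ih =>
    intro k hk
    rcases (show k = -t ∨ 1 - t ≤ k by omega) with rfl | hk
    · have hdiff := pdoPow_sub_pdoPow_of_eqOn (d := d) hB1 hB hB' (by omega) ih r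
      rw [h, sub_self, show (1 - t - 1 : ℤ) = -t by ring] at hdiff
      exact sub_eq_zero.mp (eq_zero_of_natCast_mul_eq_zero hr hdiff.symm)
    · exact ih k hk

variable (d) (r : ℕ) (A : ℤ → R)

/-- `rootApprox d r A t` is the candidate root truncated below `∂^(1-t)`: its coefficient at
`∂^(-t)` is chosen so that the coefficient of its `r`-th power at `∂^(r-t-1)` is correct. -/
noncomputable def rootApprox : ℕ → ℤ → R
  | 0 => fun k => if k = 1 then 1 else 0
  | t + 1 => Function.update (rootApprox t) (-t)
      ((r : ℚ)⁻¹ • (A (r - t - 1) - pdoPow d (rootApprox t) r (r - t - 1)))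

noncomputable def root (k : ℤ) : R :=
  rootApprox d r A (1 - k).toNat k

variable {d r A}

lemma rootApprox_succ_of_ne {t : ℕ} {k : ℤ} (hk : k ≠ -t) :
    rootApprox d r A (t + 1) k = rootApprox d r A t k :=
  Function.update_of_ne hk _ _

lemma rootApprox_eq_of_le {t t' : ℕ} (htt' : t ≤ t') {k : ℤ} (hk : 1 - t ≤ k) :
    rootApprox d r A t' k = rootApprox d r A t k := by
  induction t', htt' using Nat.le_induction with
  | base => rfl
  | succ t' htt' ih => rw [rootApprox_succ_of_ne (by omega), ih]

lemma rootApprox_eq_zero_of_le : ∀ {t : ℕ} {k : ℤ}, k ≤ -t → rootApprox d r A t k = 0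
  | 0, _, hk => if_neg (by omega)
  | t + 1, _, hk => by
    rw [rootApprox_succ_of_ne (by omega), rootApprox_eq_zero_of_le (by omega)]

lemma root_eq_rootApprox {t : ℕ} {k : ℤ} (hk : 1 - t ≤ k) :
    root d r A k = rootApprox d r A t k := by
  rcases le_total (1 - k).toNat t with h | h
  · exact (rootApprox_eq_of_le h (by omega)).symm
  · exact rootApprox_eq_of_le h hk

lemma root_one : root d r A 1 = 1 := by
  rw [root_eq_rootApprox (t := 0) (k := 1) (by norm_num)]
  simp [rootApprox]

lemma root_eq_zero_of_one_lt {k : ℤ} (hk : 1 < k) : root d r A k = 0 := by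
  rw [root_eq_rootApprox (t := 0) (by omega)]
  exact if_neg (by omega)

lemma pdoPow_root (hr : r ≠ 0) (hlead : A r = 1) (hbound : ∀ n : ℤ, r < n → A n = 0) :
    pdoPow d (root d r A) r = A := by
  funext n
  rcases lt_trichotomy n r with hn | rfl | hn
  · obtain ⟨t, rfl⟩ : ∃ t : ℕ, n = r - t - 1 := ⟨(r - 1 - n).toNat, by omega⟩
    have happrox : ∀ k, 1 < k → rootApprox d r A t k = 0 := fun k hk =>
      (root_eq_rootApprox (by omega)).symm.trans (root_eq_zero_of_one_lt hk)
    have hdiff := pdoPow_sub_pdoPow_of_eqOn (d := d) root_one (fun k => root_eq_zero_of_one_lt)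
      happrox (by omega) (fun k => root_eq_rootApprox (t := t)) r
    have hroot : root d r A (-t) =
        (r : ℚ)⁻¹ • (A (r - t - 1) - pdoPow d (rootApprox d r A t) r (r - t - 1)) := by
      rw [root_eq_rootApprox (t := t + 1) (by omega)]
      exact Function.update_self _ _ _
    rw [show (1 - t + r - 2 : ℤ) = r - t - 1 by ring, show (1 - t - 1 : ℤ) = -t by ring,
      rootApprox_eq_zero_of_le le_rfl, sub_zero, hroot, natCast_mul_inv_smul hr] at hdiff
    exact sub_left_injective hdiff
  · rw [pdoPow_natCast root_one fun k => root_eq_zero_of_one_lt, hlead]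
  · rw [pdoPow_eq_zero_of_lt (fun k => root_eq_zero_of_one_lt) r n hn, hbound n hn]

end Root

/-- Existence and uniqueness of the r-th root of a pseudo-differential
operator of the form `A = ∂ₓʳ + Σ_{n≥1} aₙ ∂ₓ^{r-n}`: there is a unique
`B = ∂ₓ + Σ_{n≥0} bₙ ∂ₓ^{-n}` with `Bʳ = A`. -/
theorem stmt_6 {R : Type*} [CommRing R] [Algebra ℚ R] (d : Derivation ℚ R R)
    (r : ℕ) (hr : 2 ≤ r) (A : ℤ → R)
    (hlead : A (r : ℤ) = 1) (hbound : ∀ n : ℤ, (r : ℤ) < n → A n = 0) :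
    ∃! B : ℤ → R, B 1 = 1 ∧ (∀ n : ℤ, 1 < n → B n = 0) ∧ pdoPow d B r = A := by
  have hr0 : r ≠ 0 := by omega
  refine ⟨root d r A, ⟨root_one, fun n => root_eq_zero_of_one_lt, pdoPow_root hr0 hlead hbound⟩,
    fun B ⟨hB1, hB, hBA⟩ => ?_⟩
  exact eq_of_pdoPow_eq hr0 hB1 root_one hB (fun n => root_eq_zero_of_one_lt)
    (hBA.trans (pdoPow_root hr0 hlead hbound).symm)
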